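/- arXiv:1904.11307 — 6 statements merged into one kernel-verified Lean document; each statement's English description precedes it below -/
import Mathlib

section
/- Every infinite directed partially ordered set I can be written as an increasing union ⋃_{α < |I|} I_α where each I_α is a directed subset of I of cardinality strictly less than |I|, and I_α ⊆ I_β whenever α < β. -/
/-!
If `|I|` is uncountable, enumerate `I` in order type `|I|.ord` and let `I_α` be the directed
closure of the elements of rank at most `α`: closing a set `S` under a choice of upper bounds of
pairs, in countably many rounds, gives a directed set of size at most `max ℵ₀ |S| < |I|`.
If `I` is countable the stages have to be finite, so the closure is too big; instead take an
increasing cofinal sequence `b` and let `I_n` be the first `n` elements of an enumeration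
together with `b 0, …, b n`, a finite set with greatest element `b n`.
-/

open Cardinal Set

universe u

section DirectedClosure

variable {α : Type u} (r : α → α → Prop) [IsDirected α r]

noncomputable def directedUB (a b : α) : α := (directed_of r a b).choose

theorem rel_directedUB_left (a b : α) : r a (directedUB r a b) :=
  (directed_of r a b).choose_spec.1

theorem rel_directedUB_right (a b : α) : r b (directedUB r a b) :=
  (directed_of r a b).choose_spec.2

noncomputable def directedClosureStage (S : Set α) : ℕ → Set α
  | 0 => S
  | n + 1 =>
    directedClosureStage S n ∪
      image2 (directedUB r) (directedClosureStage S n) (directedClosureStage S n)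

noncomputable def directedClosure (S : Set α) : Set α := ⋃ n, directedClosureStage r S n

variable {r} {S T : Set α}

theorem monotone_directedClosureStage (S : Set α) : Monotone (directedClosureStage r S) :=
  monotone_nat_of_le_succ fun _ => subset_union_left

theorem subset_directedClosure (S : Set α) : S ⊆ directedClosure r S :=
  subset_iUnion (directedClosureStage r S) 0

theorem directedClosureStage_mono (h : S ⊆ T) (n : ℕ) :
    directedClosureStage r S n ⊆ directedClosureStage r T n := by
  induction n with
  | zero => exact h
  | succ n ih => exact union_subset_union ih (image2_subset ih ih)

theorem directedClosure_mono (h : S ⊆ T) : directedClosure r S ⊆ directedClosure r T :=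
  iUnion_mono (directedClosureStage_mono h)

theorem directedOn_directedClosure (S : Set α) : DirectedOn r (directedClosure r S) := by
  intro a ha b hb
  obtain ⟨m, ham⟩ := mem_iUnion.1 ha
  obtain ⟨n, hbn⟩ := mem_iUnion.1 hb
  have hmono := monotone_directedClosureStage (r := r) S
  refine ⟨directedUB r a b, mem_iUnion.2 ⟨max m n + 1, Or.inr ?_⟩,
    rel_directedUB_left r a b, rel_directedUB_right r a b⟩
  exact mem_image2_of_mem (hmono (le_max_left m n) ham) (hmono (le_max_right m n) hbn)

theorem mk_directedClosureStage_le (S : Set α) (n : ℕ) :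
    #(directedClosureStage r S n) ≤ max ℵ₀ #S := by
  have hκ : ℵ₀ ≤ max ℵ₀ #S := le_max_left _ _
  induction n with
  | zero => exact le_max_right _ _
  | succ n ih =>
    calc #(directedClosureStage r S (n + 1))
        ≤ #(directedClosureStage r S n) +
            #(directedClosureStage r S n) * #(directedClosureStage r S n) :=
          (mk_union_le _ _).trans (add_le_add_right mk_image2_le _)
      _ ≤ max ℵ₀ #S + max ℵ₀ #S * max ℵ₀ #S := by gcongr
      _ = max ℵ₀ #S := by rw [mul_eq_self hκ, add_eq_self hκ]

theorem mk_directedClosure_le (S : Set α) : #(directedClosure r S) ≤ max ℵ₀ #S := by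
  have h := mk_iUnion_le_lift (directedClosureStage r S)
  simp only [lift_uzero, mk_nat, lift_aleph0] at h
  calc #(directedClosure r S) ≤ ℵ₀ * ⨆ n, #(directedClosureStage r S n) := h
    _ ≤ ℵ₀ * max ℵ₀ #S := by gcongr; exact ciSup_le' (mk_directedClosureStage_le S)
    _ = max ℵ₀ #S := by rw [mul_eq_max le_rfl (le_max_left _ _), max_eq_right (le_max_left _ _)]

end DirectedClosure

theorem exists_ordinal_rank (α : Type u) :
    ∃ rank : α → Ordinal.{u}, (∀ x, rank x < (#α).ord) ∧
      (∀ o < (#α).ord, ∃ x, rank x = o) ∧ ∀ o < (#α).ord, #{x | rank x < o} < #α := by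
  obtain ⟨r, _, hr⟩ := exists_ord_eq α
  refine ⟨Ordinal.typein r, fun x => hr ▸ Ordinal.typein_lt_type r x,
    fun o ho => Ordinal.typein_surj r (hr ▸ ho), fun o ho => ?_⟩
  obtain ⟨y, rfl⟩ := Ordinal.typein_surj r (hr ▸ ho)
  simp only [Ordinal.typein_lt_typein]
  exact card_typein_lt y hr

section CountableStage

open Encodable

variable {α : Type u} [Preorder α] [IsDirected α (· ≤ ·)] [Encodable α] [Inhabited α]

noncomputable def cofinalSeq : ℕ → α := (directed_id (r := (· ≤ ·))).sequence id

noncomputable def countableStage (o : Ordinal.{u}) : Set α :=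
  {x | (encode x : Ordinal) < o} ∪ cofinalSeq '' {n | (n : Ordinal) ≤ o}

theorem countableStage_mono : Monotone (countableStage (α := α)) := fun _ _ h =>
  union_subset_union (fun _ hx => lt_of_lt_of_le hx h)
    (image_mono fun _ hn => le_trans hn h)

theorem countableStage_natCast (m : ℕ) :
    countableStage (m : Ordinal) = {x : α | encode x < m} ∪ cofinalSeq '' Iic m := by
  simp [countableStage, Iic]

theorem isGreatest_countableStage_natCast (m : ℕ) :
    IsGreatest (countableStage (m : Ordinal)) (cofinalSeq m : α) := by
  have hmono := (directed_id (r := (· ≤ ·))).sequence_mono (α := α) (f := id)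
  rw [countableStage_natCast]
  refine ⟨Or.inr ⟨m, self_mem_Iic, rfl⟩, ?_⟩
  rintro x (hx | ⟨n, hn, rfl⟩)
  · exact ((directed_id (r := (· ≤ ·))).le_sequence x).trans (hmono (Nat.succ_le_of_lt hx))
  · exact hmono hn

theorem finite_countableStage_natCast (m : ℕ) : (countableStage (m : Ordinal) : Set α).Finite := by
  rw [countableStage_natCast]
  exact (((finite_lt_nat m).preimage encode_injective.injOn)).union ((finite_Iic m).image _)

theorem mem_countableStage_encode_add_one (x : α) :
    x ∈ countableStage ((encode x + 1 : ℕ) : Ordinal) := by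
  rw [countableStage_natCast]
  exact Or.inl (Nat.lt_succ_self _)

end CountableStage

def IsSmallDirectedExhaustion {I : Type u} [Preorder I] (f : Ordinal.{u} → Set I) : Prop :=
  (∀ α β : Ordinal.{u}, α < β → β < (#I).ord → f α ⊆ f β) ∧
    (∀ α : Ordinal.{u}, α < (#I).ord →
      ((f α).Nonempty ∧ DirectedOn (· ≤ ·) (f α) ∧ #(f α) < #I)) ∧
    (∀ x : I, ∃ α : Ordinal.{u}, α < (#I).ord ∧ x ∈ f α)

section Exhaustion

variable {I : Type u} [Preorder I] [IsDirected I (· ≤ ·)]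

theorem exists_isSmallDirectedExhaustion_of_aleph0_lt (hI : ℵ₀ < #I) :
    ∃ f : Ordinal.{u} → Set I, IsSmallDirectedExhaustion f := by
  obtain ⟨rank, rank_lt, rank_surj, mk_lt⟩ := exists_ordinal_rank I
  have hlim : Order.IsSuccLimit (#I).ord := isSuccLimit_ord hI.le
  refine ⟨fun α => directedClosure (· ≤ ·) {x | rank x ≤ α},
    fun α β hαβ _ => directedClosure_mono fun x hx => le_trans hx hαβ.le,
    fun α hα => ⟨?_, directedOn_directedClosure _, ?_⟩,
    fun x => ⟨rank x, rank_lt x, subset_directedClosure _ (le_refl (rank x))⟩⟩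
  · obtain ⟨x, hx⟩ := rank_surj α hα
    exact ⟨x, subset_directedClosure _ hx.le⟩
  · have hsmall : #{x | rank x ≤ α} < #I := by
      simpa only [Order.lt_succ_iff] using mk_lt _ (hlim.succ_lt hα)
    exact (mk_directedClosure_le _).trans_lt (max_lt hI hsmall)

theorem exists_isSmallDirectedExhaustion_of_countable [Countable I] [Infinite I] :
    ∃ f : Ordinal.{u} → Set I, IsSmallDirectedExhaustion f := by
  let := Encodable.ofCountable I
  have : Inhabited I := Classical.inhabited_of_nonempty'
  have hmk : #I = ℵ₀ := mk_eq_aleph0 I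
  have hord : (#I).ord = Ordinal.omega0 := by rw [hmk, ord_aleph0]
  refine ⟨countableStage, fun α β hαβ _ => countableStage_mono hαβ.le, fun α hα => ?_,
    fun x => ⟨_, hord ▸ Ordinal.natCast_lt_omega0 _, mem_countableStage_encode_add_one x⟩⟩
  obtain ⟨m, rfl⟩ := Ordinal.lt_omega0.1 (hord ▸ hα)
  have htop := isGreatest_countableStage_natCast (α := I) m
  exact ⟨htop.nonempty, fun _ ha _ hb => ⟨_, htop.1, htop.2 ha, htop.2 hb⟩,
    hmk ▸ (finite_countableStage_natCast m).lt_aleph0⟩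

end Exhaustion

/-- Every infinite directed partially ordered set `I` can be written as an increasing union
`⋃_{α < |I|} I_α` where each `I_α` is a directed subset of `I` of cardinality strictly less
than `|I|`, and `I_α ⊆ I_β` whenever `α < β`. -/
theorem stmt1 (I : Type u) [PartialOrder I] [IsDirected I (· ≤ ·)] [Infinite I] :
    ∃ f : Ordinal.{u} → Set I,
      (∀ α β : Ordinal.{u}, α < β → β < (#I).ord → f α ⊆ f β) ∧
      (∀ α : Ordinal.{u}, α < (#I).ord →
        ((f α).Nonempty ∧ DirectedOn (· ≤ ·) (f α) ∧ #(f α) < #I)) ∧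
      (∀ x : I, ∃ α : Ordinal.{u}, α < (#I).ord ∧ x ∈ f α) := by
  rcases (aleph0_le_mk I).lt_or_eq with hI | hI
  · exact exists_isSmallDirectedExhaustion_of_aleph0_lt hI
  · have : Countable I := mk_le_aleph0_iff.1 hI.ge
    exact exists_isSmallDirectedExhaustion_of_countable
end

section
/- Let μ ≤ λ be regular cardinals with λ μ-closed. In any μ-directed poset I, every subset of cardinality strictly less than λ is contained in a μ-directed subset of I of cardinality strictly less than λ. -/
/-!
If `lam` is `μ`-closed, the family of all subsets of size `< μ` of a set of size `< lam` has
itself size `< lam`: split it by the cardinality `κ < μ` of the subsets and use `θ ^ κ ≤ θ ^< μ`.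
This family is then trivially a cofinal family of size `< lam`, which is condition (iii) of
Adámek–Rosický, Theorem 2.11; the implication (iii) → (iv) of that theorem
(`Cardinal.SharplyLT.exists_isCardinalFiltered_set_of_exists_cofinal`) is the statement, once
`μ`-filteredness of a preorder is read as boundedness of its subsets of size `< μ`.
-/

open Cardinal Set CategoryTheory

theorem Cardinal.le_two_powerlt (c : Cardinal.{u}) : c ≤ 2 ^< c := by
  by_contra! h
  exact (cantor _).not_ge (le_powerlt 2 h)

theorem hasCardinalLT_setCardinalLT {μ lam : Cardinal.{u}} [Fact lam.IsRegular] {X : Type u}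
    (hμ : μ < lam) (hX : max #X ℵ₀ ^< μ < lam) :
    HasCardinalLT (CardinalDirectedPoset.SetCardinalLT μ X) lam := by
  have hι : HasCardinalLT (Iio μ.ord) lam := by
    simpa [HasCardinalLT, Cardinal.mk_Iio_ordinal] using hμ
  have hα (j : Iio μ.ord) : HasCardinalLT {S : Set X // #S ≤ j.1.card} lam :=
    (hasCardinalLT_iff_cardinal_mk_lt _ _).2 <|
      (mk_bounded_set_le X _).trans_lt ((le_powerlt _ (lt_ord.1 j.2)).trans_lt hX)
  refine (hasCardinalLT_sigma _ lam hι hα).of_injective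
    (fun S => ⟨⟨(#S.1).ord, ord_lt_ord.2 ?_⟩, S.1, (card_ord _).ge⟩) ?_
  · exact (hasCardinalLT_iff_cardinal_mk_lt _ _).1 S.2
  · exact fun S T h => Subtype.ext (congrArg (fun p => p.2.1) h)

theorem isCardinalFiltered_iff_bddAbove (J : Type u) [Preorder J] (κ : Cardinal.{u})
    [Fact κ.IsRegular] : IsCardinalFiltered J κ ↔ ∀ s : Set J, #s < κ → BddAbove s := by
  refine ⟨fun _ s hs => ?_, fun h => isCardinalFiltered_preorder J κ fun K f hK => ?_⟩
  · have hs' : HasCardinalLT s κ := (hasCardinalLT_iff_cardinal_mk_lt _ _).2 hs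
    exact ⟨IsCardinalFiltered.max (fun i : s => i.1) hs',
      fun i hi => leOfHom (IsCardinalFiltered.toMax (fun i : s => i.1) hs' ⟨i, hi⟩)⟩
  · obtain ⟨ub, hub⟩ := h (range f) (mk_range_le.trans_lt hK)
    exact ⟨ub, fun k => hub ⟨k, rfl⟩⟩

theorem stmt7_general (μ lam : Cardinal.{u}) (hμ : μ.IsRegular) (hlam : lam.IsRegular)
    (hclosed : ∀ θ : Cardinal.{u}, θ < lam → θ ^< μ < lam)
    (I : Type u) [PartialOrder I]
    (hdir : ∀ s : Set I, #s < μ → ∃ ub : I, ∀ i ∈ s, i ≤ ub)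
    (s : Set I) (hs : #s < lam) :
    ∃ t : Set I, s ⊆ t ∧ #t < lam ∧
      ∀ u : Set I, u ⊆ t → #u < μ → ∃ ub ∈ t, ∀ i ∈ u, i ≤ ub := by
  have : Fact μ.IsRegular := ⟨hμ⟩
  have : Fact lam.IsRegular := ⟨hlam⟩
  have hμlam : μ < lam := (le_two_powerlt μ).trans_lt <|
    hclosed 2 ((natCast_lt_aleph0 (n := 2)).trans_le hlam.aleph0_le)
  have haleph0 : ℵ₀ < lam := hμ.aleph0_le.trans_lt hμlam
  have : IsCardinalFiltered I μ := (isCardinalFiltered_iff_bddAbove I μ).2 hdir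
  obtain ⟨t, hst, ht, htcard⟩ :=
    SharplyLT.exists_isCardinalFiltered_set_of_exists_cofinal hμlam
      (fun X hX => ⟨univ, (hasCardinalLT_iff_of_equiv (Equiv.Set.univ _) lam).2 <|
        hasCardinalLT_setCardinalLT hμlam <|
          hclosed _ (max_lt ((hasCardinalLT_iff_cardinal_mk_lt _ _).1 hX) haleph0),
        IsCofinal.univ⟩)
      s ((hasCardinalLT_iff_cardinal_mk_lt _ _).2 hs)
  refine ⟨t, hst, (hasCardinalLT_iff_cardinal_mk_lt _ _).1 htcard, fun u hut hu => ?_⟩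
  obtain ⟨⟨ub, hub⟩, hbound⟩ := (isCardinalFiltered_iff_bddAbove t μ).1 ht (Subtype.val ⁻¹' u)
    ((mk_preimage_of_injective _ _ Subtype.val_injective).trans_lt hu)
  exact ⟨ub, hub, fun i hi => hbound (a := ⟨i, hut hi⟩) hi⟩

/-- Let `μ ≤ lam` be regular cardinals with `lam` `μ`-closed. In any `μ`-directed poset `I`,
every subset of cardinality strictly less than `lam` is contained in a `μ`-directed subset
of `I` of cardinality strictly less than `lam`. -/
theorem stmt7 (μ lam : Cardinal.{u}) (hμ : μ.IsRegular) (hlam : lam.IsRegular)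
    (hle : μ ≤ lam) (hclosed : ∀ θ : Cardinal.{u}, θ < lam → θ ^< μ < lam)
    (I : Type u) [PartialOrder I]
    (hdir : ∀ s : Set I, #s < μ → ∃ ub : I, ∀ i ∈ s, i ≤ ub)
    (s : Set I) (hs : #s < lam) :
    ∃ t : Set I, s ⊆ t ∧ #t < lam ∧
      ∀ u : Set I, u ⊆ t → #u < μ → ∃ ub ∈ t, ∀ i ∈ u, i ≤ ub :=
  stmt7_general μ lam hμ hlam hclosed I hdir s hs
end

section
/- Let θ be an infinite cardinal and let λ be the least cardinal with 2^θ < 2^λ. Then λ is a regular uncountable cardinal, θ < λ ≤ 2^θ, and 2^{<λ} = 2^θ. -/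
/-!
Minimality of `λ` says exactly that `2^κ ≤ 2^θ` for every `κ < λ`; with `θ < λ` this gives
`2^{<λ} = 2^θ`, and Cantor's theorem `2^θ < 2^{2^θ}` gives `λ ≤ 2^θ`. For regularity, cover `λ`
by `cf λ` initial segments of size `< λ`, so that `2^λ ≤ (2^{<λ})^{cf λ} = 2^{θ · cf λ}`; if
`cf λ < λ` then `θ · cf λ < λ`, whence `2^λ ≤ 2^θ`, contradicting the choice of `λ`.
-/

open Cardinal Ordinal Set

universe u

namespace Cardinal

theorem power_le_powerlt_power_cof {a c : Cardinal.{u}} (hc : ℵ₀ ≤ c) :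
    a ^ c ≤ (a ^< c) ^ c.ord.cof := by
  rcases eq_or_ne a 0 with rfl | ha
  · rw [zero_power (aleph0_pos.trans_le hc).ne']
    exact zero_le
  induction c using Cardinal.inductionOn with | mk α
  obtain ⟨_, _, hα⟩ := exists_ord_eq_type_lt α
  have : NoMaxOrder α := by
    rw [← isSuccPrelimit_type_lt_iff, ← hα]
    exact (isSuccLimit_ord hc).isSuccPrelimit
  obtain ⟨s, hs, hs'⟩ := exists_ord_cof_eq α
  have hcover : #α ≤ sum fun i : s => #(Iio i.1) := by
    rw [← mk_univ, ← isCofinal_iff_iUnion_Iio_eq_univ.1 hs, biUnion_eq_iUnion]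
    exact mk_iUnion_le_sum_mk
  calc a ^ #α ≤ a ^ sum fun i : s => #(Iio i.1) := power_le_power_left ha hcover
    _ = prod fun i : s => a ^ #(Iio i.1) := power_sum a _
    _ ≤ prod fun _ : s => a ^< #α :=
        prod_le_prod _ _ fun i => le_powerlt a (mk_Iio_lt i.1 hα)
    _ = (a ^< #α) ^ (#α).ord.cof := by
        rw [prod_const', hα, cof_type, ← card_ord (Order.cof _), ← hs', card_type]

theorem isRegular_of_powerlt_le_power {a c θ : Cardinal.{u}} (hc : ℵ₀ ≤ c) (hθc : θ < c)
    (hle : a ^< c ≤ a ^ θ) (hlt : a ^< c < a ^ c) : c.IsRegular := by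
  refine ⟨hc, not_lt.1 fun hcof => hlt.not_ge ?_⟩
  calc a ^ c ≤ (a ^< c) ^ c.ord.cof := power_le_powerlt_power_cof hc
    _ ≤ (a ^ θ) ^ c.ord.cof := power_le_power_right hle
    _ = a ^ (θ * c.ord.cof) := power_mul.symm
    _ ≤ a ^< c := le_powerlt a (mul_lt_of_lt hc hθc hcof)

end Cardinal

/-- Let `θ` be an infinite cardinal and let `lam` be the least cardinal with `2^θ < 2^lam`.
Then `lam` is a regular uncountable cardinal, `θ < lam ≤ 2^θ`, and `2^{<lam} = 2^θ`. -/
theorem stmt8 (θ lam : Cardinal.{u}) (hθ : ℵ₀ ≤ θ)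
    (h1 : (2 : Cardinal.{u}) ^ θ < 2 ^ lam)
    (h2 : ∀ κ : Cardinal.{u}, κ < lam → ¬ ((2 : Cardinal.{u}) ^ θ < 2 ^ κ)) :
    lam.IsRegular ∧ ℵ₀ < lam ∧ θ < lam ∧ lam ≤ 2 ^ θ ∧
      (2 : Cardinal.{u}) ^< lam = 2 ^ θ := by
  have hθlam : θ < lam := not_le.1 fun h => h1.not_ge (power_le_power_left two_ne_zero h)
  have hlam : ℵ₀ < lam := hθ.trans_lt hθlam
  have hpowerlt : (2 : Cardinal.{u}) ^< lam = 2 ^ θ :=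
    (powerlt_le.2 fun κ hκ => not_lt.1 (h2 κ hκ)).antisymm (le_powerlt 2 hθlam)
  have hle : lam ≤ 2 ^ θ := not_lt.1 fun h => h2 _ h (cantor _)
  exact ⟨isRegular_of_powerlt_le_power hlam.le hθlam hpowerlt.le (hpowerlt ▸ h1), hlam, hθlam,
    hle, hpowerlt⟩
end

section
/- If a complete first-order theory T has the order property, then for every infinite cardinal λ ≥ |T| there is a set A of cardinality λ with strictly more than λ many complete 1-types over A; in particular T is not λ-stable for any λ ≥ |T|. -/
open FirstOrder Cardinal

universe u v

variable {L : FirstOrder.Language.{u, u}} {M : Type u} [L.Structure M]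

/-- Two tuples have the same type over a parameter set `A` (in the ambient structure `M`,
thought of as a monster model): they satisfy the same formulas with parameters from `A`. -/
def SameTypeOver (L : FirstOrder.Language.{u, u}) {M : Type u} [L.Structure M] (A : Set M) {α : Type v} (a b : α → M) : Prop :=
  ∀ (n : ℕ) (φ : L.Formula (α ⊕ Fin n)) (c : Fin n → M), (∀ i, c i ∈ A) →
    (φ.Realize (Sum.elim a c) ↔ φ.Realize (Sum.elim b c))

/-- `a ⫝_N B` : the type `tp(a / N ∪ B)` is finitely satisfiable in `N`: every formula with
parameters from `N ∪ B` satisfied by `a` is satisfied by a tuple from `N`. -/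
def FinSatIndep (L : FirstOrder.Language.{u, u}) {M : Type u} [L.Structure M] (N : Set M) {α : Type v} (a : α → M) (B : Set M) : Prop :=
  ∀ (n : ℕ) (φ : L.Formula (α ⊕ Fin n)) (c : Fin n → M), (∀ i, c i ∈ N ∪ B) →
    φ.Realize (Sum.elim a c) →
      ∃ a' : α → M, (∀ i, a' i ∈ N) ∧ φ.Realize (Sum.elim a' c)

/-- The structure `M` has the order property: some formula orders an infinite sequence
of finite tuples. -/
def HasOrderProp (L : FirstOrder.Language.{u, u}) (M : Type u) [L.Structure M] : Prop :=
  ∃ (k : ℕ) (φ : L.Formula (Fin k ⊕ Fin k)) (a : ℕ → Fin k → M),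
    ∀ i j : ℕ, φ.Realize (Sum.elim (a i) (a j)) ↔ i < j

/-- An abstract complete type over `B ⊆ M` in variables `α`, represented as a set of
formula/parameter pairs: parameters come from `B`, every finite subset is realized in `M`
(equivalently, the type is consistent with the elementary diagram of `M`), and the set is
complete (contains each formula over `B` or its negation). -/
def IsCompleteTypeOn (α : Type v) (B : Set M)
    (p : Set (Σ n : ℕ, L.Formula (α ⊕ Fin n) × (Fin n → M))) : Prop :=
  (∀ q ∈ p, ∀ i, q.2.2 i ∈ B) ∧
  (∀ s : Finset (Σ n : ℕ, L.Formula (α ⊕ Fin n) × (Fin n → M)), ↑s ⊆ p →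
    ∃ a : α → M, ∀ q ∈ s, q.2.1.Realize (Sum.elim a q.2.2)) ∧
  (∀ (n : ℕ) (φ : L.Formula (α ⊕ Fin n)) (c : Fin n → M), (∀ i, c i ∈ B) →
    (⟨n, (φ, c)⟩ ∈ p ∨ ⟨n, (φ.not, c)⟩ ∈ p))


/-!
Compactness (here an ultraproduct of copies of `M` indexed by the finite subsets of `J`)
stretches the `φ`-ordered sequence along any linear order `J`. Take `J = Lex (ι → Fin 3)`, with
`ι` the initial ordinal of the least `κ` such that `2 ^ κ > lam`: the branches `ι → {0, 2}` are
`2 ^ κ > lam` many, and any two of them are separated by a node (a branch cut off by the constant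
`1`), of which there are at most `lam`. Over the parameters `A` of the node tuples, distinct
branches get distinct `φ`-types, so there are more than `lam` many `k`-types over a set of size
`lam`.

It remains to go down to `1`-types. If every set of size `lam` carried at most `lam` many
`1`-types, induction on `m` would bound the `m`-types over `A` by `lam`: the type of `c` over `A`
is determined by the type of `init c` and the type of `c (last m)` over `A ∪ init c`, transported
to a fixed representative `c₀` of the type of `init c`; this transport is possible because
`c₀` and `init c` satisfy the same formulas over `A`.
-/

open FirstOrder.Language Set

namespace LexTree

variable {ι : Type u}

def branch (η : ι → Bool) : Lex (ι → Fin 3) :=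
  toLex fun γ => bif η γ then 2 else 0

theorem branch_injective : Function.Injective (branch (ι := ι)) := by
  intro η η' h
  funext γ
  have := congrFun h γ
  cases hη : η γ <;> cases hη' : η' γ <;> simp [branch, hη, hη'] at this ⊢

variable [LinearOrder ι]

def node (γ₀ : ι) (s : Iio γ₀ → Bool) : Lex (ι → Fin 3) :=
  toLex fun γ => if h : γ < γ₀ then bif s ⟨γ, h⟩ then 2 else 0 else 1

theorem exists_node_between {η η' : ι → Bool} (h : branch η < branch η') :
    ∃ γ₀ s, branch η < node γ₀ s ∧ node γ₀ s < branch η' := by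
  obtain ⟨γ₀, hagree, hlt⟩ := h
  have hη : η γ₀ = false ∧ η' γ₀ = true := by
    simp only [branch, Pi.toLex_apply] at hlt
    cases hη : η γ₀ <;> cases hη' : η' γ₀ <;> simp [hη, hη'] at hlt ⊢
  refine ⟨γ₀, fun γ => η γ, ⟨γ₀, fun γ hγ => ?_, ?_⟩, ⟨γ₀, fun γ hγ => ?_, ?_⟩⟩
  · simp [branch, node, hγ]
  · simp [branch, node, hη.1]
  · simpa [branch, node, hγ] using hagree γ hγ
  · simp [branch, node, hη.2]

theorem mk_range_node_le (γ₀ : ι) : #(range (node γ₀)) ≤ 2 ^ #(Iio γ₀) := by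
  simpa using mk_range_le (f := node γ₀)

end LexTree

theorem exists_linearOrder_many_cuts {lam : Cardinal.{u}} (hlam : ℵ₀ ≤ lam) :
    ∃ (J : Type u) (_ : LinearOrder J) (I B : Set J), #I ≤ lam ∧ lam < #B ∧
      ∀ x ∈ B, ∀ y ∈ B, x < y → ∃ z ∈ I, x < z ∧ z < y := by
  obtain ⟨κ, hκ, hκmin⟩ : ∃ κ : Cardinal.{u}, lam < 2 ^ κ ∧ ∀ μ < κ, 2 ^ μ ≤ lam :=
    ⟨_, csInf_mem (s := {κ | lam < 2 ^ κ}) ⟨lam, cantor lam⟩,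
      fun μ hμ => not_lt.1 (notMem_of_lt_csInf' (s := {κ | lam < 2 ^ κ}) hμ)⟩
  have hκlam : κ ≤ lam := by
    by_contra! h
    exact (hκmin lam h).not_gt (cantor lam)
  let ι := κ.ord.ToType
  refine ⟨Lex (ι → Fin 3), inferInstance, ⋃ γ₀, range (LexTree.node γ₀),
    range LexTree.branch, ?_, ?_, ?_⟩
  · calc #(⋃ γ₀, range (LexTree.node γ₀)) ≤ #ι * ⨆ γ₀, #(range (LexTree.node γ₀)) :=
          mk_iUnion_le _
      _ ≤ lam * lam := by
          refine mul_le_mul' (by simpa [ι] using hκlam) (ciSup_le' fun γ₀ => ?_)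
          exact (LexTree.mk_range_node_le γ₀).trans (hκmin _ (by simpa [ι] using mk_Iio_lt γ₀))
      _ = lam := mul_eq_self hlam
  · rw [mk_range_eq _ LexTree.branch_injective]
    simpa [ι] using hκ
  · rintro _ ⟨η, rfl⟩ _ ⟨η', rfl⟩ h
    obtain ⟨γ₀, s, h₁, h₂⟩ := LexTree.exists_node_between h
    exact ⟨_, mem_iUnion.2 ⟨γ₀, mem_range_self s⟩, h₁, h₂⟩

theorem exists_model_indexedBy_linearOrder [Nonempty M] {α : Type*}
    (φ : L.Formula (α ⊕ α)) (a : ℕ → α → M)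
    (ha : ∀ i j, φ.Realize (Sum.elim (a i) (a j)) ↔ i < j) (J : Type u) [LinearOrder J] :
    ∃ (N : (L.completeTheory M).ModelType.{u, u, u}) (b : J → α → N),
      ∀ i j, φ.Realize (Sum.elim (b i) (b j)) ↔ i < j := by
  classical
  let U : Ultrafilter (Finset J) := .of Filter.atTop
  have mem_eventually (i j : J) : ∀ᶠ s in (U : Filter (Finset J)), i ∈ s ∧ j ∈ s :=
    Filter.Eventually.mono (Ultrafilter.of_le _ (Filter.eventually_ge_atTop {i, j}))
      fun s hs => ⟨hs (by simp), hs (by simp)⟩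
  let rank (s : Finset J) (j : J) : ℕ :=
    if h : j ∈ s then (s.orderIsoOfFin rfl).symm ⟨j, h⟩ else 0
  have rank_lt_rank : ∀ s i j, i ∈ s → j ∈ s → (rank s i < rank s j ↔ i < j) := by
    intro s i j hi hj
    simp only [rank, dif_pos hi, dif_pos hj, Fin.val_fin_lt, OrderIso.lt_iff_lt,
      Subtype.mk_lt_mk]
  let N := (U : Filter (Finset J)).Product fun _ => M
  have : N ⊨ L.completeTheory M := (Theory.model_iff _).2 fun σ hσ =>
    (Ultraproduct.sentence_realize σ).2 (.of_forall fun _ => (mem_completeTheory.1 hσ))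
  let c : J → α → Finset J → M := fun j v s => a (rank s j) v
  let b : J → α → N := fun j v => (c j v : N)
  suffices h : ∀ i j, φ.Realize (Sum.elim (b i) (b j)) ↔ i < j from ⟨.of _ N, b, h⟩
  intro i j
  have hcast : Sum.elim (b i) (b j) = fun p => ((Sum.elim (c i) (c j) p : Finset J → M) : N) := by
    funext p; cases p <;> rfl
  rw [hcast, ← Filter.eventually_const (f := (U : Filter (Finset J))) (p := i < j)]
  refine (Ultraproduct.realize_formula_cast (M := fun _ => M) (u := U) φ _).trans ?_
  refine Filter.eventually_congr ((mem_eventually i j).mono fun s hs => ?_)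
  rw [← rank_lt_rank s i j hs.1 hs.2, ← ha]
  exact iff_of_eq (congrArg _ (by funext p; cases p <;> rfl))

abbrev ParamFormula (L : FirstOrder.Language.{u, u}) (N : Type u) (α : Type v) :=
  Σ n : ℕ, L.Formula (α ⊕ Fin n) × (Fin n → N)

namespace ParamFormula

variable {N : Type u} {α : Type v} {m : ℕ}

def ParamsIn (x : ParamFormula L N α) (A : Set N) : Prop :=
  ∀ i, x.2.2 i ∈ A

def not (x : ParamFormula L N α) : ParamFormula L N α :=
  ⟨x.1, (x.2.1.not, x.2.2)⟩

def top : ParamFormula L N α :=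
  ⟨0, (⊤, Fin.elim0)⟩

def inf (x y : ParamFormula L N α) : ParamFormula L N α :=
  ⟨x.1 + y.1, (x.2.1.relabel (Sum.map id (Fin.castAdd y.1)) ⊓
    y.2.1.relabel (Sum.map id (Fin.natAdd x.1)), Fin.append x.2.2 y.2.2)⟩

def iff (x y : ParamFormula L N α) : ParamFormula L N α :=
  ⟨x.1 + y.1, ((x.2.1.relabel (Sum.map id (Fin.castAdd y.1))).iff
    (y.2.1.relabel (Sum.map id (Fin.natAdd x.1))), Fin.append x.2.2 y.2.2)⟩

def lastToInr {n : ℕ} : Fin (m + 1) ⊕ Fin n → (Fin m ⊕ Fin n) ⊕ Unit :=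
  Sum.elim (Fin.lastCases (.inr ()) fun j => .inl (.inl j)) fun i => .inl (.inr i)

noncomputable def allLast (x : ParamFormula L N (Fin (m + 1))) : ParamFormula L N (Fin m) :=
  ⟨x.1, ((x.2.1.relabel lastToInr).iAlls Unit, x.2.2)⟩

noncomputable def exLast (x : ParamFormula L N (Fin (m + 1))) : ParamFormula L N (Fin m) :=
  ⟨x.1, ((x.2.1.relabel lastToInr).iExs Unit, x.2.2)⟩

def bindInit (c : Fin m → N) (x : ParamFormula L N (Fin (m + 1))) : ParamFormula L N Unit :=
  ⟨m + x.1, (x.2.1.relabel (Sum.elim (Fin.lastCases (.inl ()) fun j => .inr (Fin.castAdd x.1 j))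
    fun i => .inr (Fin.natAdd m i)), Fin.append c x.2.2)⟩

section ParamsIn

variable {A : Set N} {x y : ParamFormula L N α}

theorem append_mem {n₁ n₂ : ℕ} {e₁ : Fin n₁ → N} {e₂ : Fin n₂ → N} (h₁ : ∀ i, e₁ i ∈ A)
    (h₂ : ∀ i, e₂ i ∈ A) (i : Fin (n₁ + n₂)) : Fin.append e₁ e₂ i ∈ A := by
  cases i using Fin.addCases <;> simp [h₁, h₂]

theorem paramsIn_top : (top : ParamFormula L N α).ParamsIn A :=
  fun i => i.elim0

theorem ParamsIn.inf (hx : x.ParamsIn A) (hy : y.ParamsIn A) : (x.inf y).ParamsIn A :=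
  append_mem hx hy

theorem ParamsIn.iff (hx : x.ParamsIn A) (hy : y.ParamsIn A) : (x.iff y).ParamsIn A :=
  append_mem hx hy

theorem ParamsIn.bindInit {c : Fin m → N} {x : ParamFormula L N (Fin (m + 1))}
    (hx : x.ParamsIn A) : (bindInit c x).ParamsIn (A ∪ range c) :=
  append_mem (fun j => Or.inr ⟨j, rfl⟩) fun i => Or.inl (hx i)

end ParamsIn

variable [L.Structure N]

def Holds (x : ParamFormula L N α) (a : α → N) : Prop :=
  x.2.1.Realize (Sum.elim a x.2.2)

section Holds

variable {n₁ n₂ : ℕ} {x y : ParamFormula L N α} {a : α → N}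

theorem realize_relabel_castAdd {φ : L.Formula (α ⊕ Fin n₁)} {e₁ : Fin n₁ → N}
    {e₂ : Fin n₂ → N} :
    (φ.relabel (Sum.map id (Fin.castAdd n₂))).Realize (Sum.elim a (Fin.append e₁ e₂)) ↔
      φ.Realize (Sum.elim a e₁) := by
  rw [Formula.realize_relabel]
  exact iff_of_eq (congrArg _ (by funext p; cases p <;> simp))

theorem realize_relabel_natAdd {φ : L.Formula (α ⊕ Fin n₂)} {e₁ : Fin n₁ → N}
    {e₂ : Fin n₂ → N} :
    (φ.relabel (Sum.map id (Fin.natAdd n₁))).Realize (Sum.elim a (Fin.append e₁ e₂)) ↔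
      φ.Realize (Sum.elim a e₂) := by
  rw [Formula.realize_relabel]
  exact iff_of_eq (congrArg _ (by funext p; cases p <;> simp))

@[simp]
theorem holds_not : x.not.Holds a ↔ ¬x.Holds a :=
  Formula.realize_not

@[simp]
theorem holds_top : (top : ParamFormula L N α).Holds a :=
  Formula.realize_top.2 trivial

@[simp]
theorem holds_inf : (x.inf y).Holds a ↔ x.Holds a ∧ y.Holds a := by
  simp only [Holds, inf, Formula.realize_inf, realize_relabel_castAdd, realize_relabel_natAdd]

@[simp]
theorem holds_iff : (x.iff y).Holds a ↔ (x.Holds a ↔ y.Holds a) := by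
  simp only [Holds, ParamFormula.iff, Formula.realize_iff, realize_relabel_castAdd,
    realize_relabel_natAdd]

end Holds

section Last

variable {x : ParamFormula L N (Fin (m + 1))} {c : Fin m → N}

theorem elim_comp_lastToInr {n : ℕ} (c : Fin m → N) (e : Fin n → N) (y : N) :
    Sum.elim (Sum.elim c e) (fun _ => y) ∘ lastToInr = Sum.elim (Fin.snoc c y) e := by
  funext p
  rcases p with j | i
  · cases j using Fin.lastCases <;> simp [lastToInr]
  · rfl

@[simp]
theorem holds_allLast : x.allLast.Holds c ↔ ∀ y, x.Holds (Fin.snoc c y) := by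
  simp only [Holds, allLast, Formula.realize_iAlls, Formula.realize_relabel]
  refine (Equiv.funUnique Unit N).forall_congr fun i => ?_
  rw [← elim_comp_lastToInr]
  rfl

@[simp]
theorem holds_exLast : x.exLast.Holds c ↔ ∃ y, x.Holds (Fin.snoc c y) := by
  simp only [Holds, exLast, Formula.realize_iExs, Formula.realize_relabel]
  refine (Equiv.funUnique Unit N).exists_congr fun i => ?_
  rw [← elim_comp_lastToInr]
  rfl

@[simp]
theorem holds_bindInit {y : N} : (bindInit c x).Holds (fun _ => y) ↔ x.Holds (Fin.snoc c y) := by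
  simp only [Holds, bindInit, Formula.realize_relabel]
  refine iff_of_eq (congrArg _ (funext fun p => ?_))
  rcases p with j | i
  · cases j using Fin.lastCases <;> simp
  · simp

end Last

theorem exists_paramsIn_holds_snoc_iff {A : Set N} (hA : A.Nonempty) (c : Fin m → N)
    {q : ParamFormula L N Unit} (hq : q.ParamsIn (A ∪ range c)) :
    ∃ x : ParamFormula L N (Fin (m + 1)), x.ParamsIn A ∧
      ∀ y, q.Holds (fun _ => y) ↔ x.Holds (Fin.snoc c y) := by
  classical
  obtain ⟨a₀, ha₀⟩ := hA
  choose j hj using fun i (hi : q.2.2 i ∉ A) => (hq i).resolve_left hi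
  -- parameters of `q` coming from `c` become variables; `a₀` is a dummy parameter in their slot
  let ρ : Unit ⊕ Fin q.1 → Fin (m + 1) ⊕ Fin q.1 := Sum.elim (fun _ => .inl (Fin.last m))
    fun i => if h : q.2.2 i ∈ A then .inr i else .inl (Fin.castSucc (j i h))
  refine ⟨⟨q.1, (q.2.1.relabel ρ, fun i => if q.2.2 i ∈ A then q.2.2 i else a₀)⟩,
    fun i => ?_, fun y => ?_⟩
  · dsimp only
    split_ifs with h
    exacts [h, ha₀]
  · simp only [Holds, Formula.realize_relabel]
    refine iff_of_eq (congrArg _ (funext fun p => ?_))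
    rcases p with _ | i
    · simp [ρ]
    · by_cases h : q.2.2 i ∈ A <;> simp [ρ, h, hj]

end ParamFormula

open ParamFormula

def tpOf (L : FirstOrder.Language.{u, u}) {N : Type u} [L.Structure N] {α : Type v} (A : Set N)
    (a : α → N) : Set (ParamFormula L N α) :=
  {x | x.ParamsIn A ∧ x.Holds a}

/-- `tp(c (last m) / A ∪ init c)`, with the parameters `init c` replaced by `c₀`. -/
def transportType (L : FirstOrder.Language.{u, u}) {N : Type u} [L.Structure N] {m : ℕ}
    (A : Set N) (c₀ : Fin m → N) (c : Fin (m + 1) → N) : Set (ParamFormula L N Unit) :=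
  {q | q.ParamsIn (A ∪ range c₀) ∧
    ∃ x ∈ tpOf L A c, ∀ y, q.Holds (fun _ => y) ↔ x.Holds (Fin.snoc c₀ y)}

section Transport

variable {N : Type u} [L.Structure N] {m : ℕ} {A : Set N} {c₀ : Fin m → N}
  {c : Fin (m + 1) → N}

theorem holds_iff_holds_of_tpOf_eq (htp : tpOf L A c₀ = tpOf L A (Fin.init c))
    {x₁ x₂ : ParamFormula L N (Fin (m + 1))} (hx₁ : x₁.ParamsIn A) (hx₂ : x₂.ParamsIn A)
    (h : ∀ y, x₁.Holds (Fin.snoc c₀ y) ↔ x₂.Holds (Fin.snoc c₀ y)) :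
    x₁.Holds c ↔ x₂.Holds c := by
  have hmem : (x₁.iff x₂).allLast ∈ tpOf L A c₀ := ⟨hx₁.iff hx₂, by simpa using h⟩
  rw [htp] at hmem
  simpa [Fin.snoc_init_self] using holds_allLast.1 hmem.2 (c (Fin.last m))

theorem exists_holds_snoc_of_tpOf_eq (htp : tpOf L A c₀ = tpOf L A (Fin.init c))
    {x : ParamFormula L N (Fin (m + 1))} (hx : x ∈ tpOf L A c) :
    ∃ y, x.Holds (Fin.snoc c₀ y) := by
  have hmem : x.exLast ∈ tpOf L A (Fin.init c) :=
    ⟨hx.1, holds_exLast.2 ⟨c (Fin.last m), by simpa [Fin.snoc_init_self] using hx.2⟩⟩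
  rw [← htp] at hmem
  exact holds_exLast.1 hmem.2

theorem exists_mem_tpOf_imp_of_subset_transportType (s : Finset (ParamFormula L N Unit))
    (hs : ↑s ⊆ transportType L A c₀ c) :
    ∃ x ∈ tpOf L A c, ∀ y, x.Holds (Fin.snoc c₀ y) → ∀ q ∈ s, q.Holds (fun _ => y) := by
  classical
  induction s using Finset.induction_on with
  | empty => exact ⟨top, ⟨paramsIn_top, holds_top⟩, by simp⟩
  | insert q s _ ih =>
    rw [Finset.coe_insert, insert_subset_iff] at hs
    obtain ⟨-, x₁, hx₁, hq⟩ := hs.1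
    obtain ⟨x₂, hx₂, hs⟩ := ih hs.2
    refine ⟨x₁.inf x₂, ⟨hx₁.1.inf hx₂.1, holds_inf.2 ⟨hx₁.2, hx₂.2⟩⟩, fun y hy => ?_⟩
    rw [holds_inf] at hy
    simpa [hq y, hy.1] using hs y hy.2

theorem isCompleteTypeOn_transportType (hA : A.Nonempty)
    (htp : tpOf L A c₀ = tpOf L A (Fin.init c)) :
    IsCompleteTypeOn Unit (A ∪ range c₀) (transportType L A c₀ c) := by
  refine ⟨fun q hq => hq.1, fun s hs => ?_, fun n ψ d hd => ?_⟩
  · obtain ⟨x, hx, hs⟩ := exists_mem_tpOf_imp_of_subset_transportType s hs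
    obtain ⟨y, hy⟩ := exists_holds_snoc_of_tpOf_eq htp hx
    exact ⟨fun _ => y, hs y hy⟩
  · obtain ⟨x, hxA, hx⟩ := exists_paramsIn_holds_snoc_iff (q := ⟨n, (ψ, d)⟩) hA c₀ hd
    by_cases hc : x.Holds c
    · exact .inl ⟨hd, x, ⟨hxA, hc⟩, hx⟩
    · exact .inr ⟨hd, x.not, ⟨hxA, holds_not.2 hc⟩, fun y => not_congr (hx y)⟩

theorem bindInit_mem_transportType_iff (htp : tpOf L A c₀ = tpOf L A (Fin.init c))
    {x : ParamFormula L N (Fin (m + 1))} (hx : x.ParamsIn A) :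
    bindInit c₀ x ∈ transportType L A c₀ c ↔ x.Holds c := by
  refine ⟨fun ⟨_, x', hx', h⟩ => ?_, fun h => ⟨hx.bindInit, x, ⟨hx, h⟩, fun y => holds_bindInit⟩⟩
  exact (holds_iff_holds_of_tpOf_eq htp hx hx'.1
    fun y => holds_bindInit.symm.trans (h y)).2 hx'.2

theorem tpOf_eq_of_transportType_eq {c' : Fin (m + 1) → N}
    (htp : tpOf L A c₀ = tpOf L A (Fin.init c)) (htp' : tpOf L A c₀ = tpOf L A (Fin.init c'))
    (h : transportType L A c₀ c = transportType L A c₀ c') : tpOf L A c = tpOf L A c' := by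
  ext x
  refine and_congr_right fun hx => ?_
  rw [← bindInit_mem_transportType_iff htp hx, ← bindInit_mem_transportType_iff htp' hx, h]

end Transport

theorem mk_image_le_mk_image_of_factors {X Y Z : Type u} {f : X → Y} {g : X → Z} {s : Set X}
    (h : ∀ x ∈ s, ∀ x' ∈ s, g x = g x' → f x = f x') : #(f '' s) ≤ #(g '' s) := by
  choose pre hpre using fun y : f '' s => y.2
  refine mk_le_of_injective (f := fun y => ⟨g (pre y), mem_image_of_mem g (hpre y).1⟩) ?_
  intro y y' hyy'
  rw [Subtype.ext_iff, ← (hpre y).2, ← (hpre y').2]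
  exact h _ (hpre y).1 _ (hpre y').1 (Subtype.ext_iff.1 hyy')

theorem mk_le_mk_range_of_injOn {X Y : Type u} {f : X → Y} {s : Set X} (h : InjOn f s) :
    #s ≤ #(range f) :=
  (mk_image_eq_of_injOn f s h).symm.trans_le (mk_le_mk_of_subset (image_subset_range f s))

theorem mk_union_eq_of_mk_le {X : Type u} {lam : Cardinal.{u}} {S T : Set X} (hlam : ℵ₀ ≤ lam)
    (hS : #S = lam) (hT : #T ≤ lam) : #(S ∪ T : Set X) = lam :=
  le_antisymm ((mk_union_le _ _).trans (add_le_of_le hlam hS.le hT))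
    (hS ▸ mk_le_mk_of_subset subset_union_left)

theorem exists_superset_mk_eq {X : Type u} {lam : Cardinal.{u}} {S : Set X} (hlam : ℵ₀ ≤ lam)
    (hS : #S ≤ lam) (hX : lam ≤ #X) : ∃ A : Set X, S ⊆ A ∧ #A = lam :=
  let ⟨W, hW⟩ := le_mk_iff_exists_set.1 hX
  ⟨W ∪ S, subset_union_right, mk_union_eq_of_mk_le hlam hW hS⟩

theorem mk_biUnion_le_of_finite {X J : Type u} {lam : Cardinal.{u}} {I : Set J} {t : J → Set X}
    (hlam : ℵ₀ ≤ lam) (hI : #I ≤ lam) (ht : ∀ z, (t z).Finite) : #(⋃ z ∈ I, t z) ≤ lam :=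
  calc #(⋃ z ∈ I, t z) ≤ #I * ⨆ z : I, #(t z) := mk_biUnion_le t I
    _ ≤ lam * lam := mul_le_mul' hI (ciSup_le' fun z => (ht z).lt_aleph0.le.trans hlam)
    _ = lam := mul_eq_self hlam

section Counting

variable {N : Type u} [L.Structure N] {lam : Cardinal.{u}} {A : Set N}

theorem mk_range_tpOf_succ_le (hlam : ℵ₀ ≤ lam)
    (hstable : ∀ B : Set N, #B = lam →
      #{p : Set (ParamFormula L N Unit) // IsCompleteTypeOn Unit B p} ≤ lam)
    (hA : #A = lam) {m : ℕ} (hm : #(range (tpOf L A (α := Fin m))) ≤ lam) :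
    #(range (tpOf L A (α := Fin (m + 1)))) ≤ lam := by
  have hA₀ : A.Nonempty :=
    nonempty_coe_sort.1 (mk_ne_zero_iff.1 (hA ▸ (aleph0_pos.trans_le hlam).ne'))
  choose rep hrep using fun q : range (tpOf L A (α := Fin m)) => q.2
  have hfiber (q : range (tpOf L A (α := Fin m))) :
      #(tpOf L A '' {c : Fin (m + 1) → N | tpOf L A (Fin.init c) = q}) ≤ lam := by
    have htp (c : Fin (m + 1) → N) (hc : tpOf L A (Fin.init c) = q) :
        tpOf L A (rep q) = tpOf L A (Fin.init c) :=
      (hrep q).trans hc.symm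
    calc _ ≤ #(transportType L A (rep q) '' {c | tpOf L A (Fin.init c) = q}) :=
          mk_image_le_mk_image_of_factors fun c hc c' hc' =>
            tpOf_eq_of_transportType_eq (htp c hc) (htp c' hc')
      _ ≤ #{p | IsCompleteTypeOn Unit (A ∪ range (rep q)) p} :=
          mk_le_mk_of_subset (image_subset_iff.2 fun c hc =>
            isCompleteTypeOn_transportType hA₀ (htp c hc))
      _ ≤ lam := hstable _ <|
          mk_union_eq_of_mk_le hlam hA ((finite_range _).lt_aleph0.le.trans hlam)
  calc #(range (tpOf L A (α := Fin (m + 1))))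
      ≤ #(⋃ q : range (tpOf L A (α := Fin m)),
          tpOf L A '' {c : Fin (m + 1) → N | tpOf L A (Fin.init c) = q}) := by
        refine mk_le_mk_of_subset ?_
        rintro _ ⟨c, rfl⟩
        refine mem_iUnion.2 ⟨⟨_, mem_range_self (Fin.init c)⟩, ?_⟩
        exact ⟨c, rfl, rfl⟩
    _ ≤ #(range (tpOf L A (α := Fin m))) * lam := (mk_iUnion_le _).trans
        (mul_le_mul' le_rfl (ciSup_le' hfiber))
    _ ≤ lam := (mul_le_mul' hm le_rfl).trans (mul_eq_self hlam).le

theorem mk_range_tpOf_le (hlam : ℵ₀ ≤ lam)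
    (hstable : ∀ B : Set N, #B = lam →
      #{p : Set (ParamFormula L N Unit) // IsCompleteTypeOn Unit B p} ≤ lam)
    (hA : #A = lam) (m : ℕ) : #(range (tpOf L A (α := Fin m))) ≤ lam := by
  induction m with
  | zero =>
    exact (mk_le_one_iff_set_subsingleton.2 (subsingleton_range _)).trans
      (one_le_aleph0.trans hlam)
  | succ m ih => exact mk_range_tpOf_succ_le hlam hstable hA ih

end Counting

theorem tpOf_ne_of_lt_of_lt {J : Type*} [LinearOrder J] {N : Type u} [L.Structure N] {k : ℕ}
    {φ : L.Formula (Fin k ⊕ Fin k)} {b : J → Fin k → N}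
    (hb : ∀ i j, φ.Realize (Sum.elim (b i) (b j)) ↔ i < j) {A : Set N} {x y z : J}
    (hz : ∀ v, b z v ∈ A) (hxz : x < z) (hzy : z < y) : tpOf L A (b x) ≠ tpOf L A (b y) := by
  intro h
  have hmem : (⟨k, (φ, b z)⟩ : ParamFormula L N (Fin k)) ∈ tpOf L A (b x) :=
    ⟨hz, (hb x z).2 hxz⟩
  rw [h] at hmem
  exact ((hb y z).1 hmem.2).not_gt hzy

theorem injOn_tpOf_of_separated {J : Type*} [LinearOrder J] {N : Type u} [L.Structure N] {k : ℕ}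
    {φ : L.Formula (Fin k ⊕ Fin k)} {b : J → Fin k → N}
    (hb : ∀ i j, φ.Realize (Sum.elim (b i) (b j)) ↔ i < j) {I B : Set J}
    (hsep : ∀ x ∈ B, ∀ y ∈ B, x < y → ∃ z ∈ I, x < z ∧ z < y) {A : Set N}
    (hA : ∀ z ∈ I, ∀ v, b z v ∈ A) : InjOn (fun x => tpOf L A (b x)) B := by
  intro x hx y hy hxy
  by_contra hne
  rcases lt_or_gt_of_ne hne with h | h
  · obtain ⟨z, hz, hxz, hzy⟩ := hsep x hx y hy h
    exact tpOf_ne_of_lt_of_lt hb (hA z hz) hxz hzy hxy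
  · obtain ⟨z, hz, hyz, hzx⟩ := hsep y hy x hx h
    exact tpOf_ne_of_lt_of_lt hb (hA z hz) hyz hzx hxy.symm

theorem le_mk_of_lt_mk_fin_arrow {lam : Cardinal.{u}} {N : Type u} {k : ℕ} (hlam : ℵ₀ ≤ lam)
    (h : lam < #(Fin k → N)) : lam ≤ #N := by
  have : lam < max #N ℵ₀ := h.trans_le (by simpa using power_nat_le_max (c := #N) (n := k))
  exact ((lt_max_iff.1 this).resolve_right hlam.not_gt).le

/-- If (the complete theory of) `M` has the order property, then for every infinite cardinal
`lam ≥ |T|` there is, in some model of the theory of `M`, a parameter set `A` of cardinality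
`lam` with strictly more than `lam` many complete 1-types over `A`; in particular the theory
is not `lam`-stable. -/
theorem stmt11 (L : FirstOrder.Language.{u, u}) (M : Type u) [L.Structure M] [Infinite M]
    (hOP : HasOrderProp L M) (lam : Cardinal.{u}) (hlam : L.card + ℵ₀ ≤ lam) :
    ∃ (N : (L.completeTheory M).ModelType) (A : Set N),
      #A = lam ∧
      lam < #{p : Set (Σ n : ℕ, L.Formula (Unit ⊕ Fin n) × (Fin n → N)) //
        IsCompleteTypeOn Unit A p} := by
  obtain ⟨k, φ, a, ha⟩ := hOP
  have hlam₀ : ℵ₀ ≤ lam := le_of_add_le_right hlam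
  obtain ⟨J, _, I, B, hI, hB, hsep⟩ := exists_linearOrder_many_cuts hlam₀
  obtain ⟨N, b, hb⟩ := exists_model_indexedBy_linearOrder φ a ha J
  refine ⟨N, ?_⟩
  by_contra! hstable
  let S := ⋃ z ∈ I, range (b z)
  have hinj (A : Set N) (hSA : S ⊆ A) : InjOn (fun x => tpOf L A (b x)) B :=
    injOn_tpOf_of_separated hb hsep fun z hz v => hSA (mem_biUnion hz (mem_range_self v))
  have hN : lam ≤ #N := le_mk_of_lt_mk_fin_arrow hlam₀ <| hB.trans_le <|
    (mk_le_mk_range_of_injOn (InjOn.of_comp (g := tpOf L S) (hinj S subset_rfl))).trans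
      (mk_set_le _)
  obtain ⟨A, hSA, hA⟩ :=
    exists_superset_mk_eq hlam₀ (mk_biUnion_le_of_finite hlam₀ hI fun z => finite_range (b z)) hN
  exact (mk_range_tpOf_le hlam₀ hstable hA k).not_gt <| hB.trans_le <|
    (mk_le_mk_range_of_injOn (hinj A hSA)).trans
      (mk_le_mk_of_subset (range_comp_subset_range b (tpOf L A)))
end

section
/- For every infinite cardinal λ there exists a linear order of cardinality λ with strictly more than λ Dedekind cuts. -/
/-!
Let `σ` be the least cardinal with `λ < λ ^ σ`; it is infinite, `σ ≤ λ`, and `λ ^ κ ≤ λ` for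
every `κ < σ`. Take `I` to be the functions `σ → λ` (both read as initial well-orders) that vanish
above some point, ordered lexicographically. Each such function is determined by its restriction
to an initial segment of size `< σ`, so `#I ≤ σ · λ = λ`. On the other hand, every lexicographic
strict inequality `f < g` between arbitrary functions is witnessed by a truncation of `g`, which
lies in `I`; hence `g ↦ {x ∈ I | x ≤ g}` is injective and `I` has at least `λ ^ σ > λ` cuts.
-/

open Cardinal Set

universe u

theorem mk_le_mk_cuts_of_forall_lt_exists_mem {α : Type u} [LinearOrder α] (D : Set α)
    (hD : ∀ a b : α, a < b → ∃ d ∈ D, a < d ∧ d ≤ b) :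
    #α ≤ #{s : Set D // ∀ a ∈ s, ∀ b : D, b ≤ a → b ∈ s} := by
  refine mk_le_of_injective
    (f := fun a => ⟨{d : D | (d : α) ≤ a}, fun d hd e hed => le_trans hed hd⟩) fun a b hab => ?_
  have hcut : ∀ d : D, (d : α) ≤ a ↔ (d : α) ≤ b :=
    Set.ext_iff.1 (congrArg Subtype.val hab)
  by_contra hne
  rcases lt_or_gt_of_ne hne with hlt | hlt
  · obtain ⟨d, hd, had, hdb⟩ := hD a b hlt
    exact had.not_ge ((hcut ⟨d, hd⟩).2 hdb)
  · obtain ⟨d, hd, hbd, hda⟩ := hD b a hlt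
    exact hbd.not_ge ((hcut ⟨d, hd⟩).1 hda)

section BoundedSupport

variable {ι L : Type u} [LinearOrder ι] [LinearOrder L] [OrderBot L]

def truncate (f : ι → L) (a : ι) : ι → L := fun i => if i ≤ a then f i else ⊥

theorem truncate_le (f : ι → L) (a : ι) : truncate f a ≤ f := by
  intro i
  by_cases hi : i ≤ a <;> simp [truncate, hi]

variable (ι L) in
def boundedSupport : Set (Lex (ι → L)) := ⋃ b : ι, {f | ∀ i, b < i → ofLex f i = ⊥}

theorem toLex_truncate_mem_boundedSupport (f : ι → L) (a : ι) :
    toLex (truncate f a) ∈ boundedSupport ι L :=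
  mem_iUnion.2 ⟨a, fun _ hi => if_neg hi.not_ge⟩

theorem exists_mem_boundedSupport_lt_le [WellFoundedLT ι] {f g : Lex (ι → L)} (h : f < g) :
    ∃ d ∈ boundedSupport ι L, f < d ∧ d ≤ g := by
  obtain ⟨a, heq, hlt⟩ := h
  refine ⟨_, toLex_truncate_mem_boundedSupport (ofLex g) a, ⟨a, fun j hj => ?_, ?_⟩,
    Pi.toLex_monotone (truncate_le _ a)⟩
  · exact (heq j hj).trans (if_pos hj.le).symm
  · exact hlt.trans_eq (if_pos le_rfl).symm

theorem mk_vanishing_above_le (b : ι) :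
    #{f : Lex (ι → L) | ∀ i, b < i → ofLex f i = ⊥} ≤ #L ^ #(Iic b) := by
  rw [power_def]
  refine mk_le_of_injective (f := fun f i => ofLex f.1 i) fun f g hfg => ?_
  refine Subtype.ext (funext fun i => ?_)
  by_cases hi : i ≤ b
  · exact congrFun hfg ⟨i, hi⟩
  · rw [not_le] at hi
    exact (f.2 i hi).trans (g.2 i hi).symm

theorem mk_boundedSupport_le (κ : Cardinal.{u}) (hκ : ∀ b : ι, #L ^ #(Iic b) ≤ κ) :
    #(boundedSupport ι L) ≤ #ι * κ :=
  calc #(boundedSupport ι L)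
        ≤ sum fun b : ι => #{f : Lex (ι → L) | ∀ i, b < i → ofLex f i = ⊥} := mk_iUnion_le_sum_mk
    _ ≤ sum fun _ : ι => κ := sum_le_sum _ _ fun b => (mk_vanishing_above_le b).trans (hκ b)
    _ = #ι * κ := sum_const' ι κ

theorem mk_le_mk_boundedSupport [Nonempty ι] : #L ≤ #(boundedSupport ι L) := by
  let a : ι := Classical.arbitrary ι
  refine mk_le_of_injective (f := fun x => ⟨_, toLex_truncate_mem_boundedSupport (fun _ => x) a⟩)
    fun x y hxy => ?_
  simpa [truncate] using congrFun (congrArg (fun f => ofLex f.1) hxy) a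

end BoundedSupport

theorem mk_Iic_ord_toType_lt {c : Cardinal.{u}} (hc : ℵ₀ ≤ c) (b : c.ord.ToType) :
    #(Iic b) < c := by
  rw [← Iio_insert]
  exact mk_insert_le.trans_lt (add_lt_of_lt hc (by simpa using mk_Iio_lt b)
    (one_lt_aleph0.trans_le hc))

theorem exists_least_exponent_lt_power {lam : Cardinal.{u}} (h : ℵ₀ ≤ lam) :
    ∃ σ, ℵ₀ ≤ σ ∧ σ ≤ lam ∧ lam < lam ^ σ ∧ ∀ c < σ, lam ^ c ≤ lam := by
  have hlam : lam < lam ^ lam := by rw [power_self_eq h]; exact cantor lam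
  set σ := sInf {c : Cardinal.{u} | lam < lam ^ c}
  have hσ : lam < lam ^ σ := csInf_mem (s := {c | lam < lam ^ c}) ⟨lam, hlam⟩
  refine ⟨σ, ?_, csInf_le' hlam, hσ, fun c hc =>
    not_lt.1 (notMem_of_lt_csInf' (s := {c | lam < lam ^ c}) hc)⟩
  by_contra! hfin
  obtain ⟨n, hn⟩ := lt_aleph0.1 hfin
  rw [hn, power_natCast] at hσ
  exact (power_nat_le h).not_gt hσ

/-- For every infinite cardinal `lam` there exists a linear order of cardinality `lam`
with strictly more than `lam` Dedekind cuts (downward-closed subsets). -/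
theorem stmt12 (lam : Cardinal.{u}) (h : ℵ₀ ≤ lam) :
    ∃ (I : Type u) (r : I → I → Prop), IsLinearOrder I r ∧ #I = lam ∧
      lam < #{s : Set I // ∀ a ∈ s, ∀ b : I, r b a → b ∈ s} := by
  obtain ⟨σ, hσ, hσlam, hlt, hmin⟩ := exists_least_exponent_lt_power h
  let ι := σ.ord.ToType
  let L := lam.ord.ToType
  have : Nonempty ι := nonempty_ord_toType (aleph0_pos.trans_le hσ).ne'
  have : Nonempty L := nonempty_ord_toType (aleph0_pos.trans_le h).ne'
  let : OrderBot L := WellFoundedLT.toOrderBot L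
  refine ⟨boundedSupport ι L, (· ≤ ·), inferInstance, le_antisymm ?_ ?_, ?_⟩
  · calc #(boundedSupport ι L) ≤ σ * lam := by
          simpa [ι] using mk_boundedSupport_le (ι := ι) (L := L) lam
            fun b => by simpa [L] using hmin _ (mk_Iic_ord_toType_lt hσ b)
      _ = lam := mul_eq_right h hσlam (aleph0_pos.trans_le hσ).ne'
  · simpa [L] using mk_le_mk_boundedSupport (ι := ι) (L := L)
  · calc lam < lam ^ σ := hlt
      _ = #(Lex (ι → L)) := by rw [← mk_ord_toType σ, ← mk_ord_toType lam, power_def]; rfl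
      _ ≤ _ := mk_le_mk_cuts_of_forall_lt_exists_mem _ fun _ _ => exists_mem_boundedSupport_lt_le
end

section
/- Work in a monster model of a complete first-order theory T without the order property. Finite-satisfiability independence over models is symmetric: for any model M and tuples ā, b̄, if tp(ā/M b̄) is finitely satisfiable in M, then tp(b̄/M ā) is finitely satisfiable in M. -/
/-
If `tp(b̄/M ā)` is not finitely satisfiable in `M`, some `φ(ȳ; ā, c̄)` with `c̄ ∈ M` holds of `b̄`
but of no tuple of `M`. Alternating the two hypotheses — finite satisfiability of `tp(ā/M b̄)` in
`M`, and `M ≼` monster — one builds pairs `(āᵢ, b̄ᵢ)` in `M` with `φ(b̄ⱼ; āᵢ, c̄)` iff `i ≤ j`: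
`āₙ` realizes `φ(b̄; x̄, c̄) ∧ ⋀_{i<n} ¬φ(b̄ᵢ; x̄, c̄)` (true of `ā` since `b̄ᵢ ∈ M`), and `b̄ₙ`
realizes `⋀_{i≤n} φ(ȳ; āᵢ, c̄)` (true of `b̄`). Then `¬φ` orders the tuples `(b̄ᵢ, āᵢ, c̄)`.
-/

open FirstOrder Cardinal

universe u v

variable {L : FirstOrder.Language.{u, u}} {M : Type u} [L.Structure M]

open FirstOrder.Language Set

theorem FinSatIndep.exists_realize_of_finite {N B : Set M} {α : Type*} {a : α → M}
    (h : FinSatIndep L N a B) {γ : Type*} [Finite γ] (φ : L.Formula (α ⊕ γ)) (c : γ → M)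
    (hc : ∀ i, c i ∈ N ∪ B) (hφ : φ.Realize (Sum.elim a c)) :
    ∃ a' : α → M, (∀ i, a' i ∈ N) ∧ φ.Realize (Sum.elim a' c) := by
  obtain ⟨n, ⟨e⟩⟩ := Finite.exists_equiv_fin γ
  have hrelabel : ∀ a' : α → M, (φ.relabel (Sum.map id e)).Realize (Sum.elim a' (c ∘ e.symm)) ↔
      φ.Realize (Sum.elim a' c) := by
    intro a'
    simp [Formula.realize_relabel, Sum.elim_comp_map, Function.comp_assoc]
  obtain ⟨a', ha', hφ'⟩ := h n _ _ (fun i => hc _) ((hrelabel a).2 hφ)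
  exact ⟨a', ha', (hrelabel a').1 hφ'⟩

theorem FinSatIndep.exists_realize_iff_forall_mem {N B : Set M} {α : Type*} {a : α → M}
    (h : FinSatIndep L N a B) {δ : Type*} [Finite δ] (φ : L.Formula (α ⊕ δ))
    (t : Finset (δ → M)) (ht : ∀ d ∈ t, ∀ j, d j ∈ N ∪ B) :
    ∃ a' : α → M, (∀ i, a' i ∈ N) ∧
      ∀ d ∈ t, (φ.Realize (Sum.elim a' d) ↔ φ.Realize (Sum.elim a d)) := by
  classical
  let φAt (d : t) : L.Formula (α ⊕ (t × δ)) := φ.relabel (Sum.map id (Prod.mk d))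
  let c : t × δ → M := fun p => p.1.1 p.2
  have hφAt : ∀ (a' : α → M) (d : t),
      (φAt d).Realize (Sum.elim a' c) ↔ φ.Realize (Sum.elim a' d) := by
    intro a' d
    simp only [φAt, Formula.realize_relabel, Sum.elim_comp_map]
    rfl
  let ψ : L.Formula (α ⊕ (t × δ)) := Formula.iInf fun d : t =>
    if φ.Realize (Sum.elim a d) then φAt d else (φAt d).not
  have hψ : ∀ a' : α → M, ψ.Realize (Sum.elim a' c) ↔
      ∀ d : t, (φ.Realize (Sum.elim a' d) ↔ φ.Realize (Sum.elim a d)) := by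
    intro a'
    simp only [ψ, Formula.realize_iInf]
    refine forall_congr' fun d => ?_
    split_ifs with hd <;> simp [hφAt, hd]
  obtain ⟨a', ha', hψa'⟩ :=
    h.exists_realize_of_finite ψ c (fun p => ht _ p.1.2 _) ((hψ a).2 fun _ => Iff.rfl)
  exact ⟨a', ha', fun d hd => (hψ a').1 hψa' ⟨d, hd⟩⟩

theorem FirstOrder.Language.ElementarySubstructure.finSatIndep_empty
    (S : L.ElementarySubstructure M) {α : Type*} [Finite α] (a : α → M) : FinSatIndep L S a ∅ := by
  intro n φ c hc hφ
  let cS : Fin n → S := fun i => ⟨c i, (hc i).resolve_right (notMem_empty _)⟩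
  have hex : ((φ.relabel Sum.swap).iExs α).Realize cS := by
    rw [← S.subtype.map_formula, Formula.realize_iExs]
    exact ⟨a, by rwa [Formula.realize_relabel, Sum.elim_swap]⟩
  obtain ⟨aS, haS⟩ := Formula.realize_iExs.1 hex
  rw [Formula.realize_relabel, Sum.elim_swap, ← S.subtype.map_formula, Sum.comp_elim] at haS
  exact ⟨((↑) : S → M) ∘ aS, fun i => (aS i).2, haS⟩

theorem hasOrderProp_of_finite {α : Type*} [Finite α] (φ : L.Formula (α ⊕ α))
    (a : ℕ → α → M) (h : ∀ i j, φ.Realize (Sum.elim (a i) (a j)) ↔ i < j) :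
    HasOrderProp L M := by
  obtain ⟨k, ⟨e⟩⟩ := Finite.exists_equiv_fin α
  refine ⟨k, φ.relabel (Sum.map ⇑e ⇑e), fun i => a i ∘ e.symm, fun i j => ?_⟩
  simpa [Formula.realize_relabel, Sum.elim_comp_map, Function.comp_assoc] using h i j

theorem hasOrderProp_of_realize_iff_le {α β γ : Type*} [Finite α] [Finite β] [Finite γ]
    (φ : L.Formula (β ⊕ (α ⊕ γ))) (c : γ → M) (u : ℕ → α → M) (v : ℕ → β → M)
    (h : ∀ i j, φ.Realize (Sum.elim (v j) (Sum.elim (u i) c)) ↔ i ≤ j) :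
    HasOrderProp L M := by
  let ρ : β ⊕ (α ⊕ γ) → (β ⊕ (α ⊕ γ)) ⊕ (β ⊕ (α ⊕ γ)) :=
    Sum.elim (Sum.inl ∘ Sum.inl)
      (Sum.elim (Sum.inr ∘ Sum.inr ∘ Sum.inl) (Sum.inl ∘ Sum.inr ∘ Sum.inr))
  refine hasOrderProp_of_finite (φ.not.relabel ρ) (fun i => Sum.elim (v i) (Sum.elim (u i) c))
    fun i j => ?_
  have hρ : Sum.elim (Sum.elim (v i) (Sum.elim (u i) c)) (Sum.elim (v j) (Sum.elim (u j) c)) ∘ ρ =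
      Sum.elim (v i) (Sum.elim (u j) c) := by
    funext x
    rcases x with _ | _ | _ <;> rfl
  rw [Formula.realize_relabel, hρ, Formula.realize_not, h, not_le]

theorem exists_sum_elim_comp_eq_of_mem_union_range {N : Set M} {α : Type*} (a : α → M) {n : ℕ}
    {c : Fin n → M} (hc : ∀ i, c i ∈ N ∪ range a) :
    ∃ ρ : Fin n → α ⊕ {i // c i ∈ N}, Sum.elim a (fun i : {i // c i ∈ N} => c i) ∘ ρ = c := by
  classical
  choose idx hidx using fun i (hi : c i ∉ N) => (hc i).resolve_left hi
  refine ⟨fun i => if hi : c i ∈ N then Sum.inr ⟨i, hi⟩ else Sum.inl (idx i hi),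
    funext fun i => ?_⟩
  by_cases hi : c i ∈ N <;> simp [hi, hidx]

section Symmetry

variable {S : L.ElementarySubstructure M} {α β γ : Type*} [Finite α] [Finite β] [Finite γ]
  {a : α → M} {b : β → M} {φ : L.Formula (β ⊕ (α ⊕ γ))} {c : γ → M}

omit [Finite α] in
theorem FinSatIndep.exists_mem_realize_and_forall_not (h : FinSatIndep L S a (range b))
    (hc : ∀ i, c i ∈ S) (hab : φ.Realize (Sum.elim b (Sum.elim a c)))
    (hno : ∀ v : β → M, (∀ i, v i ∈ S) → ¬ φ.Realize (Sum.elim v (Sum.elim a c)))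
    (t : Finset (β → M)) (ht : ∀ v ∈ t, ∀ i, v i ∈ S) :
    ∃ a' : α → M, (∀ i, a' i ∈ S) ∧ φ.Realize (Sum.elim b (Sum.elim a' c)) ∧
      ∀ v ∈ t, ¬ φ.Realize (Sum.elim v (Sum.elim a' c)) := by
  classical
  let σ : β ⊕ (α ⊕ γ) → α ⊕ (β ⊕ γ) := Sum.elim (Sum.inr ∘ Sum.inl) (Sum.map id Sum.inr)
  have hσ : ∀ (u : α → M) (v : β → M), (φ.relabel σ).Realize (Sum.elim u (Sum.elim v c)) ↔
      φ.Realize (Sum.elim v (Sum.elim u c)) := by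
    intro u v
    rw [Formula.realize_relabel]
    exact iff_of_eq (congrArg _ (funext fun x => by rcases x with _ | _ | _ <;> rfl))
  obtain ⟨a', ha'S, ha'⟩ := h.exists_realize_iff_forall_mem (φ.relabel σ)
    (insert (Sum.elim b c) (t.image fun v => Sum.elim v c)) (by
      simp only [Finset.mem_insert, Finset.mem_image]
      rintro _ (rfl | ⟨v, hv, rfl⟩) (j | j)
      exacts [Or.inr (mem_range_self j), Or.inl (hc j), Or.inl (ht v hv j), Or.inl (hc j)])
  refine ⟨a', ha'S, ?_, fun v hv => ?_⟩
  · rw [← hσ, ha' _ (Finset.mem_insert_self _ _), hσ]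
    exact hab
  · rw [← hσ, ha' _ (Finset.mem_insert_of_mem (Finset.mem_image_of_mem _ hv)), hσ]
    exact hno v (ht v hv)

theorem FirstOrder.Language.ElementarySubstructure.exists_mem_forall_realize (hc : ∀ i, c i ∈ S)
    (t : Finset (α → M)) (ht : ∀ u ∈ t, (∀ i, u i ∈ S) ∧ φ.Realize (Sum.elim b (Sum.elim u c))) :
    ∃ b' : β → M, (∀ i, b' i ∈ S) ∧ ∀ u ∈ t, φ.Realize (Sum.elim b' (Sum.elim u c)) := by
  classical
  obtain ⟨b', hb'S, hb'⟩ := (S.finSatIndep_empty b).exists_realize_iff_forall_mem φ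
    (t.image fun u => Sum.elim u c) (by
      simp only [Finset.mem_image]
      rintro _ ⟨u, hu, rfl⟩ (j | j)
      exacts [Or.inl ((ht u hu).1 j), Or.inl (hc j)])
  exact ⟨b', hb'S, fun u hu => (hb' _ (Finset.mem_image_of_mem _ hu)).2 (ht u hu).2⟩

theorem FinSatIndep.exists_mem_realize_of_not_hasOrderProp (hNOP : ¬ HasOrderProp L M)
    (h : FinSatIndep L S a (range b)) (hc : ∀ i, c i ∈ S)
    (hab : φ.Realize (Sum.elim b (Sum.elim a c))) :
    ∃ b' : β → M, (∀ i, b' i ∈ S) ∧ φ.Realize (Sum.elim b' (Sum.elim a c)) := by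
  classical
  by_contra! hno
  let P : (α → M) × (β → M) → Prop := fun x => (∀ i, x.1 i ∈ S) ∧ (∀ i, x.2 i ∈ S) ∧
    φ.Realize (Sum.elim b (Sum.elim x.1 c)) ∧ φ.Realize (Sum.elim x.2 (Sum.elim x.1 c))
  let r : (α → M) × (β → M) → (α → M) × (β → M) → Prop := fun x y =>
    ¬ φ.Realize (Sum.elim x.2 (Sum.elim y.1 c)) ∧ φ.Realize (Sum.elim y.2 (Sum.elim x.1 c))
  obtain ⟨f, hfP, hfr⟩ := exists_seq_of_forall_finset_exists P r fun s hs => by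
    obtain ⟨a', ha'S, hba', hno'⟩ := h.exists_mem_realize_and_forall_not hc hab hno
      (s.image Prod.snd) (by
        simp only [Finset.mem_image]
        rintro _ ⟨x, hx, rfl⟩
        exact (hs x hx).2.1)
    obtain ⟨b', hb'S, hb'⟩ := ElementarySubstructure.exists_mem_forall_realize hc
      (insert a' (s.image Prod.fst)) (by
        simp only [Finset.mem_insert, Finset.mem_image]
        rintro _ (rfl | ⟨x, hx, rfl⟩)
        exacts [⟨ha'S, hba'⟩, ⟨(hs x hx).1, (hs x hx).2.2.1⟩])
    exact ⟨(a', b'), ⟨ha'S, hb'S, hba', hb' a' (Finset.mem_insert_self _ _)⟩, fun x hx =>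
      ⟨hno' _ (Finset.mem_image_of_mem _ hx),
        hb' _ (Finset.mem_insert_of_mem (Finset.mem_image_of_mem _ hx))⟩⟩
  refine hNOP (hasOrderProp_of_realize_iff_le φ c (fun i => (f i).1) (fun i => (f i).2)
    fun i j => ?_)
  rcases lt_trichotomy i j with hij | rfl | hij
  · exact iff_of_true (hfr i j hij).2 hij.le
  · exact iff_of_true (hfP i).2.2.2 le_rfl
  · exact iff_of_false (hfr j i hij).1 hij.not_ge

end Symmetry

theorem stmt14_general (L : FirstOrder.Language.{u, u}) (M : Type u) [L.Structure M]
    (hNOP : ¬ HasOrderProp L M)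
    (S : L.ElementarySubstructure M) {k l : ℕ} (a : Fin k → M) (b : Fin l → M)
    (h : FinSatIndep L (S : Set M) a (Set.range b)) :
    FinSatIndep L (S : Set M) b (Set.range a) := by
  intro n ψ c hc hψ
  obtain ⟨ρ, hρ⟩ := exists_sum_elim_comp_eq_of_mem_union_range a hc
  have hrelabel : ∀ v : Fin l → M, (ψ.relabel (Sum.map id ρ)).Realize
      (Sum.elim v (Sum.elim a fun i => c i)) ↔ ψ.Realize (Sum.elim v c) := by
    intro v
    rw [Formula.realize_relabel, Sum.elim_comp_map, Function.comp_id, hρ]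
  obtain ⟨b', hb'S, hb'⟩ :=
    h.exists_mem_realize_of_not_hasOrderProp hNOP (fun i => i.2) ((hrelabel b).2 hψ)
  exact ⟨b', hb'S, (hrelabel b').1 hb'⟩

/-- Symmetry of finite-satisfiability independence over models, in a theory without the
order property: if `tp(ā / M b̄)` is finitely satisfiable in the model `M`, then so is
`tp(b̄ / M ā)`. -/
theorem stmt14 (L : FirstOrder.Language.{u, u}) (M : Type u) [L.Structure M] [Infinite M]
    (hNOP : ¬ HasOrderProp L M)
    (S : L.ElementarySubstructure M) {k l : ℕ} (a : Fin k → M) (b : Fin l → M)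
    (h : FinSatIndep L (S : Set M) a (Set.range b)) :
    FinSatIndep L (S : Set M) b (Set.range a) :=
  stmt14_general L M hNOP S a b h
end
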